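/- Second-order splitting: for n×n complex matrices A, B and real parameter α, exp(−iα(A+B)) = exp(−i(α/2)A) · exp(−iαB) · exp(−i(α/2)A) + O(α³); precisely, the difference of the two sides, as a function of α, vanishes to second order at α = 0 (the value and first two derivatives at α = 0 agree). -/

import Mathlib

open scoped Matrix
open NormedSpace

/-!
With `P = -(i/2)A` and `Q = -iB` the two sides are `exp(t(P+Q+P))` and
`exp(tP) exp(tQ) exp(tP)`. By the second-order Leibniz rule `(fg)'' = f''g + 2f'g' + fg''`,
at `t = 0` the product has first derivative `P+Q+P` and second derivative
`P² + Q² + P² + 2(PQ + P² + QP) = (P+Q+P)²`, the same as the exponential. It is the symmetric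
placement of `P` that makes the cross terms match although `P` and `Q` need not commute.
-/

def HasDerivTwice {𝕜 E : Type*} [NontriviallyNormedField 𝕜] [NormedAddCommGroup E]
    [NormedSpace 𝕜 E] (f f' f'' : 𝕜 → E) : Prop :=
  ∀ t, HasDerivAt f (f' t) t ∧ HasDerivAt f' (f'' t) t

namespace HasDerivTwice

section NormedSpace

variable {𝕜 E : Type*} [NontriviallyNormedField 𝕜] [NormedAddCommGroup E] [NormedSpace 𝕜 E]
  {f f' f'' g g' g'' : 𝕜 → E}

theorem deriv_eq (hf : HasDerivTwice f f' f'') : deriv f = f' :=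
  funext fun t => (hf t).1.deriv

theorem deriv_deriv_eq (hf : HasDerivTwice f f' f'') : deriv (deriv f) = f'' := by
  rw [hf.deriv_eq]
  exact funext fun t => (hf t).2.deriv

theorem sub (hf : HasDerivTwice f f' f'') (hg : HasDerivTwice g g' g'') :
    HasDerivTwice (f - g) (f' - g') (f'' - g'') :=
  fun t => ⟨(hf t).1.sub (hg t).1, (hf t).2.sub (hg t).2⟩

end NormedSpace

variable {𝕜 𝔸 : Type*} [NontriviallyNormedField 𝕜] [NormedRing 𝔸] [NormedAlgebra 𝕜 𝔸]
  {f f' f'' g g' g'' : 𝕜 → 𝔸}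

theorem mul (hf : HasDerivTwice f f' f'') (hg : HasDerivTwice g g' g'') :
    HasDerivTwice (f * g) (f' * g + f * g') (f'' * g + 2 • (f' * g') + f * g'') := by
  refine fun t => ⟨(hf t).1.mul (hg t).1, ?_⟩
  convert ((hf t).2.mul (hg t).1).add ((hf t).1.mul (hg t).2) using 1
  simp only [Pi.add_apply, Pi.mul_apply, two_smul]
  abel

end HasDerivTwice

theorem hasDerivTwice_exp_smul {𝕂 𝔸 : Type*} [RCLike 𝕂] [NormedRing 𝔸] [NormedAlgebra 𝕂 𝔸]
    [CompleteSpace 𝔸] (X : 𝔸) :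
    HasDerivTwice (fun t : 𝕂 => exp (t • X)) (fun t => exp (t • X) * X)
      (fun t => exp (t • X) * X * X) :=
  fun t => ⟨hasDerivAt_exp_smul_const X t, (hasDerivAt_exp_smul_const X t).mul_const X⟩

theorem strang_error_vanishes_to_second_order {𝕂 𝔸 : Type*} [RCLike 𝕂] [NormedRing 𝔸]
    [NormedAlgebra 𝕂 𝔸] [CompleteSpace 𝔸] (P Q : 𝔸) :
    let G : 𝕂 → 𝔸 := fun t => exp (t • (P + Q + P)) - exp (t • P) * exp (t • Q) * exp (t • P)
    G 0 = 0 ∧ deriv G 0 = 0 ∧ deriv (deriv G) 0 = 0 := by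
  intro G
  have hG : HasDerivTwice G _ _ := (hasDerivTwice_exp_smul (P + Q + P)).sub
    (((hasDerivTwice_exp_smul P).mul (hasDerivTwice_exp_smul Q)).mul (hasDerivTwice_exp_smul P))
  refine ⟨by simp [G], ?_, ?_⟩
  · rw [hG.deriv_eq]
    simp only [Pi.sub_apply, Pi.add_apply, Pi.mul_apply, zero_smul, exp_zero, one_mul, mul_one]
    abel
  · rw [hG.deriv_deriv_eq]
    simp only [Pi.sub_apply, Pi.add_apply, Pi.mul_apply, Pi.smul_apply, zero_smul, exp_zero,
      one_mul, mul_one]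
    noncomm_ring

attribute [local instance] Matrix.frobeniusNormedRing Matrix.frobeniusNormedAlgebra

/-- Second-order symmetric (Strang) splitting: the difference
`exp(−iα(A+B)) − exp(−i(α/2)A) exp(−iαB) exp(−i(α/2)A)`, as a function of the real
parameter α, vanishes to second order at α = 0: its value and first two derivatives
at α = 0 all vanish. -/
theorem strang_splitting_second_order {n : ℕ} (A B : Matrix (Fin n) (Fin n) ℂ) :
    let F : ℝ → Matrix (Fin n) (Fin n) ℂ := fun α =>
      exp ((-Complex.I * α) • (A + B)) -
        exp ((-Complex.I * (α / 2)) • A) * exp ((-Complex.I * α) • B) *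
          exp ((-Complex.I * (α / 2)) • A)
    F 0 = 0 ∧ deriv F 0 = 0 ∧ deriv (deriv F) 0 = 0 := by
  intro F
  set P := (-Complex.I / 2) • A
  set Q := -Complex.I • B
  have hF : F = fun α : ℝ =>
      exp (α • (P + Q + P)) - exp (α • P) * exp (α • Q) * exp (α • P) := by
    funext α
    have hsmul (c : ℂ) (X : Matrix (Fin n) (Fin n) ℂ) : (c * α) • X = α • c • X := by
      rw [mul_comm, mul_smul, Complex.coe_smul]
    have hC : -Complex.I • (A + B) = P + Q + P := by module
    simp only [F]
    rw [show -Complex.I * (α / 2) = -Complex.I / 2 * α by ring, hsmul, hsmul, hsmul, hC]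
  rw [hF]
  exact strang_error_vanishes_to_second_order P Q
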